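/- Let I be an instance of SPA-ST that admits a super-stable matching. Then for any two weakly stable matchings M1 and M2 in I, a student is unmatched in M1 if and only if she is unmatched in M2. -/

import Mathlib

open scoped Classical

/-- An instance of the Student-Project Allocation problem with lecturer
preferences over students, with Ties (SPA-ST).  `sPref s p q` means student `s`
ranks project `p` at least as highly as project `q` (`p ⪰_s q`); `lPref k t t'`
means lecturer `k` ranks student `t` at least as highly as student `t'`. -/
structure SPAST (S P L : Type) [Fintype S] [Fintype P] [Fintype L]
    [DecidableEq S] [DecidableEq P] [DecidableEq L] where
  /-- the lecturer offering each project -/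
  lec : P → L
  /-- project capacities -/
  c : P → ℕ
  /-- lecturer capacities -/
  d : L → ℕ
  cpos : ∀ p : P, 0 < c p
  dpos : ∀ k : L, 0 < d k
  /-- the set of projects acceptable to each student -/
  acc : S → Finset P
  sPref : S → P → P → Prop
  lPref : L → S → S → Prop
  sRefl : ∀ s : S, ∀ p ∈ acc s, sPref s p p
  sTrans : ∀ s : S, ∀ p ∈ acc s, ∀ q ∈ acc s, ∀ r ∈ acc s,
    sPref s p q → sPref s q r → sPref s p r
  sTotal : ∀ s : S, ∀ p ∈ acc s, ∀ q ∈ acc s, sPref s p q ∨ sPref s q p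
  lRefl : ∀ k : L, ∀ t : S, (∃ p ∈ acc t, lec p = k) → lPref k t t
  lTrans : ∀ k : L, ∀ t1 t2 t3 : S,
    (∃ p ∈ acc t1, lec p = k) → (∃ p ∈ acc t2, lec p = k) → (∃ p ∈ acc t3, lec p = k) →
    lPref k t1 t2 → lPref k t2 t3 → lPref k t1 t3
  lTotal : ∀ k : L, ∀ t1 t2 : S,
    (∃ p ∈ acc t1, lec p = k) → (∃ p ∈ acc t2, lec p = k) →
    lPref k t1 t2 ∨ lPref k t2 t1
  capLB : ∀ p : P, c p ≤ d (lec p)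
  capUB : ∀ k : L, d k ≤ ∑ p ∈ Finset.univ.filter (fun p => lec p = k), c p

namespace SPAST

variable {S P L : Type} [Fintype S] [Fintype P] [Fintype L]
  [DecidableEq S] [DecidableEq P] [DecidableEq L]

/-- `M` is a matching: pairs are acceptable, each student is matched at most once,
and project and lecturer capacities are respected. -/
def IsMatching (I : SPAST S P L) (M : Finset (S × P)) : Prop :=
  (∀ x ∈ M, x.2 ∈ I.acc x.1) ∧
  (∀ s : S, ∀ p q : P, (s, p) ∈ M → (s, q) ∈ M → p = q) ∧
  (∀ p : P, (M.filter (fun x => x.2 = p)).card ≤ I.c p) ∧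
  (∀ k : L, (M.filter (fun x => I.lec x.2 = k)).card ≤ I.d k)

/-- The set `M(p)` of students assigned to project `p` in `M`. -/
def projAsg (M : Finset (S × P)) (p : P) : Finset S :=
  (M.filter (fun x => x.2 = p)).image Prod.fst

/-- The set `M(l_k)` of students assigned to lecturer `k` in `M`. -/
def lecAsg (I : SPAST S P L) (M : Finset (S × P)) (k : L) : Finset S :=
  (M.filter (fun x => I.lec x.2 = k)).image Prod.fst

/-- `t` is a least-preferred (worst) student of lecturer `k` in the set `T`. -/
def WorstIn (I : SPAST S P L) (k : L) (T : Finset S) (t : S) : Prop :=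
  t ∈ T ∧ ∀ t' ∈ T, I.lPref k t' t

/-- `(s, p)` is a super-blocking pair for `M`. -/
def SuperBlocking (I : SPAST S P L) (M : Finset (S × P)) (s : S) (p : P) : Prop :=
  p ∈ I.acc s ∧ (s, p) ∉ M ∧
  (∀ q : P, (s, q) ∈ M → ¬(I.sPref s q p ∧ ¬I.sPref s p q)) ∧
  (((projAsg M p).card < I.c p ∧ (lecAsg I M (I.lec p)).card < I.d (I.lec p)) ∨
   ((projAsg M p).card < I.c p ∧ (lecAsg I M (I.lec p)).card = I.d (I.lec p) ∧
     (s ∈ lecAsg I M (I.lec p) ∨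
      ∃ t : S, WorstIn I (I.lec p) (lecAsg I M (I.lec p)) t ∧ I.lPref (I.lec p) s t)) ∨
   ((projAsg M p).card = I.c p ∧
     ∃ t : S, WorstIn I (I.lec p) (projAsg M p) t ∧ I.lPref (I.lec p) s t))

/-- `(s, p)` is a weakly-blocking pair for `M`. -/
def WeakBlocking (I : SPAST S P L) (M : Finset (S × P)) (s : S) (p : P) : Prop :=
  p ∈ I.acc s ∧ (s, p) ∉ M ∧
  (∀ q : P, (s, q) ∈ M → I.sPref s p q ∧ ¬I.sPref s q p) ∧
  (((projAsg M p).card < I.c p ∧ (lecAsg I M (I.lec p)).card < I.d (I.lec p)) ∨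
   ((projAsg M p).card < I.c p ∧ (lecAsg I M (I.lec p)).card = I.d (I.lec p) ∧
     (s ∈ lecAsg I M (I.lec p) ∨
      ∃ t : S, WorstIn I (I.lec p) (lecAsg I M (I.lec p)) t ∧
        (I.lPref (I.lec p) s t ∧ ¬I.lPref (I.lec p) t s))) ∨
   ((projAsg M p).card = I.c p ∧
     ∃ t : S, WorstIn I (I.lec p) (projAsg M p) t ∧
       (I.lPref (I.lec p) s t ∧ ¬I.lPref (I.lec p) t s)))

/-- `M` is a super-stable matching in `I`. -/
def SuperStable (I : SPAST S P L) (M : Finset (S × P)) : Prop :=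
  I.IsMatching M ∧ ∀ (s : S) (p : P), ¬SuperBlocking I M s p

/-- `M` is a weakly stable matching in `I`. -/
def WeaklyStable (I : SPAST S P L) (M : Finset (S × P)) : Prop :=
  I.IsMatching M ∧ ∀ (s : S) (p : P), ¬WeakBlocking I M s p

/-- `I` is an SPA-S instance: all preference lists are strictly ordered
(the preorders are antisymmetric). -/
def StrictPrefs (I : SPAST S P L) : Prop :=
  (∀ s : S, ∀ p ∈ I.acc s, ∀ q ∈ I.acc s, I.sPref s p q → I.sPref s q p → p = q) ∧
  (∀ k : L, ∀ t t' : S, (∃ p ∈ I.acc t, I.lec p = k) → (∃ p ∈ I.acc t', I.lec p = k) →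
    I.lPref k t t' → I.lPref k t' t → t = t')

/-- `I'` is an SPA-S instance obtained from `I` by breaking the ties. -/
def TieBreaking (I I' : SPAST S P L) : Prop :=
  I'.lec = I.lec ∧ I'.c = I.c ∧ I'.d = I.d ∧ I'.acc = I.acc ∧
  StrictPrefs I' ∧
  (∀ (s : S) (p q : P), I.sPref s p q → ¬I.sPref s q p →
    I'.sPref s p q ∧ ¬I'.sPref s q p) ∧
  (∀ (k : L) (t t' : S), I.lPref k t t' → ¬I.lPref k t' t →
    I'.lPref k t t' ∧ ¬I'.lPref k t' t)

end SPAST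

/-!
Fix a super-stable `M` and a weakly stable `M'`; it suffices that they match the same students.
Super-stability of `M` makes every edge `(s, p)` of `M' \ M` whose student is not better off in
`M` *dominated* in `M`: `p` or its lecturer is full in `M` with students all strictly preferred
to `s`. Weak stability of `M'` makes every edge of `M \ M'` whose student is better off in `M`
dominated in `M'`, with weak preference. Two such edges at the same project, or one at a lecturer
full in the other matching, contradict each other; so, counting capacities lecturer by lecturer,
the first kind of edges are at most as many as the edges of `M \ M'` whose students are not
better off in `M`. These students all own edges of the first kind, so a student matched in `M'`
but not in `M` would be one too many. Exchanging `M` and `M'` gives the converse.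
-/

namespace Finset

variable {α γ : Type*}

theorem card_filter_sdiff_le_of_card_filter_le [DecidableEq α] {s t : Finset α} {φ : α → Prop}
    [DecidablePred φ] (h : #(t.filter φ) ≤ #(s.filter φ)) :
    #((t \ s).filter φ) ≤ #((s \ t).filter φ) := by
  have hdistrib : ∀ u v : Finset α, (u \ v).filter φ = u.filter φ \ v.filter φ := by
    intro u v; ext; simp only [mem_filter, mem_sdiff]; tauto
  rw [hdistrib, hdistrib]
  exact card_sdiff_le_card_sdiff_iff.mpr h

theorem card_filter_le_card_filter_of_card_fiber_le [Fintype γ] [DecidableEq γ]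
    {s t : Finset α} (f : α → γ) (φ : γ → Prop) [DecidablePred φ]
    (h : ∀ k, φ k → #(s.filter (f · = k)) ≤ #(t.filter (f · = k))) :
    #(s.filter (fun x => φ (f x))) ≤ #(t.filter (fun x => φ (f x))) := by
  have hfiber : ∀ u : Finset α, ∀ k, φ k →
      (u.filter (fun x => φ (f x))).filter (f · = k) = u.filter (f · = k) := by
    intro u k hk; ext x; simp only [mem_filter]; grind
  have hmaps : ∀ u : Finset α, ((u.filter (fun x => φ (f x)) : Finset α) : Set α).MapsTo f
      (univ.filter φ) := by
    intro u x hx; simp_all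
  rw [card_eq_sum_card_fiberwise (hmaps s), card_eq_sum_card_fiberwise (hmaps t)]
  refine sum_le_sum fun k hk => ?_
  have hk : φ k := (mem_filter.mp hk).2
  rw [hfiber s k hk, hfiber t k hk]
  exact h k hk

theorem card_le_card_of_card_fiber_le [Fintype γ] [DecidableEq γ] {s t : Finset α}
    (f : α → γ) (h : ∀ k, #(s.filter (f · = k)) ≤ #(t.filter (f · = k))) : #s ≤ #t := by
  simpa using card_filter_le_card_filter_of_card_fiber_le f (fun _ => True) fun k _ => h k

end Finset

namespace SPAST

open Finset

section Assignment

variable {S P : Type} [DecidableEq S] [DecidableEq P] {M : Finset (S × P)} {p : P} {t : S}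

theorem mem_projAsg : t ∈ projAsg M p ↔ (t, p) ∈ M := by
  simp [projAsg]

theorem card_projAsg : #(projAsg M p) = #(M.filter (·.2 = p)) :=
  card_image_of_injOn fun _ hx _ hy hxy =>
    Prod.ext hxy ((mem_filter.mp hx).2.trans (mem_filter.mp hy).2.symm)

end Assignment

variable {S P L : Type} [Fintype S] [Fintype P] [Fintype L]
  [DecidableEq S] [DecidableEq P] [DecidableEq L] {I : SPAST S P L}

def sStrict (I : SPAST S P L) (s : S) (p q : P) : Prop := I.sPref s p q ∧ ¬I.sPref s q p

def lStrict (I : SPAST S P L) (k : L) (t t' : S) : Prop := I.lPref k t t' ∧ ¬I.lPref k t' t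

def Ranks (I : SPAST S P L) (k : L) (t : S) : Prop := ∃ p ∈ I.acc t, I.lec p = k

section Worst

variable {k : L} {T : Finset S} {s t : S}

theorem exists_worstIn (hne : T.Nonempty) (hT : ∀ t ∈ T, I.Ranks k t) : ∃ t, I.WorstIn k T t := by
  induction T using Finset.induction_on with
  | empty => simp at hne
  | @insert a T ha ih =>
    have ha' : I.Ranks k a := hT a (mem_insert_self a T)
    rcases T.eq_empty_or_nonempty with rfl | hne
    · exact ⟨a, by simp, by simpa using I.lRefl k a ha'⟩
    obtain ⟨t, htT, hworst⟩ := ih hne fun t ht => hT t (mem_insert_of_mem ht)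
    have ht' : I.Ranks k t := hT t (mem_insert_of_mem htT)
    rcases I.lTotal k a t ha' ht' with hat | hta
    · exact ⟨t, mem_insert_of_mem htT, (forall_mem_insert _ _ _).mpr ⟨hat, hworst⟩⟩
    · refine ⟨a, mem_insert_self a T, (forall_mem_insert _ _ _).mpr ⟨I.lRefl k a ha', ?_⟩⟩
      exact fun y hy => I.lTrans k y t a (hT y (mem_insert_of_mem hy)) ht' ha'
        (hworst y hy) hta

theorem WorstIn.lStrict_of_not_lPref (ht : I.WorstIn k T t) (hT : ∀ y ∈ T, I.Ranks k y)
    (hs : I.Ranks k s) (hst : ¬I.lPref k s t) : ∀ y ∈ T, I.lStrict k y s := by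
  intro y hy
  have hsy : ¬I.lPref k s y := fun h =>
    hst (I.lTrans k s y t hs (hT y hy) (hT t ht.1) h (ht.2 y hy))
  exact ⟨(I.lTotal k y s (hT y hy) hs).resolve_right hsy, hsy⟩

theorem WorstIn.lPref_of_not_lStrict (ht : I.WorstIn k T t) (hT : ∀ y ∈ T, I.Ranks k y)
    (hs : I.Ranks k s) (hst : ¬I.lStrict k s t) : ∀ y ∈ T, I.lPref k y s := by
  have hts : I.lPref k t s := by
    by_contra hts
    exact hst ⟨(I.lTotal k s t hs (hT t ht.1)).resolve_right hts, hts⟩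
  exact fun y hy => I.lTrans k y t s (hT y hy) (hT t ht.1) hs (ht.2 y hy) hts

end Worst

section Matching

variable {M : Finset (S × P)} {p : P} {k : L} {t : S}

theorem mem_lecAsg : t ∈ lecAsg I M k ↔ ∃ q, (t, q) ∈ M ∧ I.lec q = k := by
  simp [lecAsg]

theorem IsMatching.injOn_fst (hM : I.IsMatching M) : Set.InjOn Prod.fst (M : Set (S × P)) :=
  fun x hx y hy hxy => Prod.ext hxy (hM.2.1 x.1 x.2 y.2 hx (hxy ▸ hy))

theorem IsMatching.card_lecAsg (hM : I.IsMatching M) :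
    #(lecAsg I M k) = #(M.filter (I.lec ·.2 = k)) :=
  card_image_of_injOn (hM.injOn_fst.mono (coe_subset.mpr (filter_subset _ M)))

theorem IsMatching.card_projAsg_le (hM : I.IsMatching M) : #(projAsg M p) ≤ I.c p :=
  card_projAsg.trans_le (hM.2.2.1 p)

theorem IsMatching.card_lecAsg_le (hM : I.IsMatching M) : #(lecAsg I M k) ≤ I.d k :=
  hM.card_lecAsg.trans_le (hM.2.2.2 k)

theorem IsMatching.ranks_of_mem_projAsg (hM : I.IsMatching M) (ht : t ∈ projAsg M p) :
    I.Ranks (I.lec p) t :=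
  ⟨p, hM.1 _ (mem_projAsg.mp ht), rfl⟩

theorem IsMatching.ranks_of_mem_lecAsg (hM : I.IsMatching M) (ht : t ∈ lecAsg I M k) :
    I.Ranks k t := by
  obtain ⟨q, hq, rfl⟩ := mem_lecAsg.mp ht
  exact ⟨q, hM.1 _ hq, rfl⟩

end Matching

section Domination

variable {N A B : Finset (S × P)} {β β' : L → S → S → Prop} {s t : S} {p : P}

def ProjDominated (I : SPAST S P L) (N : Finset (S × P)) (β : L → S → S → Prop) (s : S)
    (p : P) : Prop :=
  #(projAsg N p) = I.c p ∧ ∀ t ∈ projAsg N p, β (I.lec p) t s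

def LecDominated (I : SPAST S P L) (N : Finset (S × P)) (β : L → S → S → Prop) (s : S)
    (p : P) : Prop :=
  #(lecAsg I N (I.lec p)) = I.d (I.lec p) ∧ ∀ t ∈ lecAsg I N (I.lec p), β (I.lec p) t s

/-- `(s, p)` is kept out of `N` by the lecturer's side: `p`, or its lecturer, is full in `N`
with students that all `β`-beat `s`. -/
def Dominated (I : SPAST S P L) (N : Finset (S × P)) (β : L → S → S → Prop) (s : S)
    (p : P) : Prop :=
  I.ProjDominated N β s p ∨ I.LecDominated N β s p

theorem LecDominated.rel (h : I.LecDominated N β s p) {x : S × P} (hx : x ∈ N)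
    (hlec : I.lec x.2 = I.lec p) : β (I.lec p) x.1 s :=
  h.2 x.1 (mem_lecAsg.mpr ⟨x.2, hx, hlec⟩)

theorem Dominated.rel (h : I.Dominated N β s p) (ht : (t, p) ∈ N) : β (I.lec p) t s :=
  h.elim (fun h => h.2 t (mem_projAsg.mpr ht)) (fun h => h.rel ht rfl)

theorem Dominated.false_of_dominated (hββ' : ∀ k s t, β k t s → β' k s t → False)
    (hs : I.Dominated A β s p) (ht : I.Dominated B β' t p) (hsB : (s, p) ∈ B)
    (htA : (t, p) ∈ A) : False :=
  hββ' _ _ _ (hs.rel htA) (ht.rel hsB)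

/-- `hside` is clause (b) of `SuperBlocking` (with `γ = lPref`) and of `WeakBlocking`
(with `γ = lStrict`). -/
theorem IsMatching.dominated_of_not_lecturer_side (hN : I.IsMatching N) {γ : S → S → Prop}
    (hγ : ∀ {T t}, I.WorstIn (I.lec p) T t → (∀ y ∈ T, I.Ranks (I.lec p) y) → ¬γ s t →
      ∀ y ∈ T, β (I.lec p) y s)
    (hside : ¬((#(projAsg N p) < I.c p ∧ #(lecAsg I N (I.lec p)) < I.d (I.lec p)) ∨
      (#(projAsg N p) < I.c p ∧ #(lecAsg I N (I.lec p)) = I.d (I.lec p) ∧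
        (s ∈ lecAsg I N (I.lec p) ∨ ∃ t, I.WorstIn (I.lec p) (lecAsg I N (I.lec p)) t ∧ γ s t)) ∨
      (#(projAsg N p) = I.c p ∧ ∃ t, I.WorstIn (I.lec p) (projAsg N p) t ∧ γ s t))) :
    I.Dominated N β s p := by
  rcases hN.card_projAsg_le.eq_or_lt with hfull | hlt
  · have hrank : ∀ y ∈ projAsg N p, I.Ranks (I.lec p) y := fun _ => hN.ranks_of_mem_projAsg
    obtain ⟨t, ht⟩ := exists_worstIn (card_pos.mp (hfull ▸ I.cpos p)) hrank
    exact Or.inl ⟨hfull, hγ ht hrank fun h => hside (Or.inr (Or.inr ⟨hfull, t, ht, h⟩))⟩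
  · have hlfull : #(lecAsg I N (I.lec p)) = I.d (I.lec p) :=
      hN.card_lecAsg_le.eq_or_lt.resolve_right fun h => hside (Or.inl ⟨hlt, h⟩)
    have hrank : ∀ y ∈ lecAsg I N (I.lec p), I.Ranks (I.lec p) y :=
      fun _ => hN.ranks_of_mem_lecAsg
    obtain ⟨t, ht⟩ := exists_worstIn (card_pos.mp (hlfull ▸ I.dpos _)) hrank
    exact Or.inr ⟨hlfull,
      hγ ht hrank fun h => hside (Or.inr (Or.inl ⟨hlt, hlfull, Or.inr ⟨t, ht, h⟩⟩))⟩

theorem SuperStable.dominated {M : Finset (S × P)} (hM : I.SuperStable M) (hacc : p ∈ I.acc s)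
    (hsp : (s, p) ∉ M) (hpref : ∀ q, (s, q) ∈ M → ¬I.sStrict s q p) :
    I.Dominated M I.lStrict s p :=
  have hs : I.Ranks (I.lec p) s := ⟨p, hacc, rfl⟩
  hM.1.dominated_of_not_lecturer_side (fun ht hT => ht.lStrict_of_not_lPref hT hs)
    fun h => hM.2 s p ⟨hacc, hsp, hpref, h⟩

theorem WeaklyStable.dominated {M : Finset (S × P)} (hM : I.WeaklyStable M)
    (hacc : p ∈ I.acc s) (hsp : (s, p) ∉ M) (hpref : ∀ q, (s, q) ∈ M → I.sStrict s p q) :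
    I.Dominated M I.lPref s p :=
  have hs : I.Ranks (I.lec p) s := ⟨p, hacc, rfl⟩
  hM.1.dominated_of_not_lecturer_side (γ := I.lStrict (I.lec p))
    (fun ht hT => ht.lPref_of_not_lStrict hT hs) fun h => hM.2 s p ⟨hacc, hsp, hpref, h⟩

end Domination

section Exchange

variable {A B : Finset (S × P)} {β β' : L → S → S → Prop} {X Y : S × P → Prop}

theorem forall_of_dominated (hββ' : ∀ k s t, β k t s → β' k s t → False)
    (hX : ∀ e ∈ B \ A, X e → I.Dominated A β e.1 e.2)
    (hY : ∀ d ∈ A \ B, ¬Y d → I.Dominated B β' d.1 d.2) {e : S × P} (he : e ∈ (B \ A).filter X) :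
    ∀ d ∈ A \ B, d.2 = e.2 → Y d := by
  intro d hd hde
  by_contra hnY
  obtain ⟨he, hXe⟩ := mem_filter.mp he
  have hdom := hY d hd hnY
  rw [hde] at hdom
  exact (hX e he hXe).false_of_dominated hββ' hdom (mem_sdiff.mp he).1
    (hde ▸ (mem_sdiff.mp hd).1)

theorem card_filter_lec_le_of_projects {l : L} (G : Finset P)
    (hG : ∀ q ∈ G, I.lec q = l ∧ ∀ d ∈ A \ B, d.2 = q → Y d)
    (hXG : ∀ e ∈ (B \ A).filter X, I.lec e.2 = l → e.2 ∈ G)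
    (hcard : #((B \ A).filter (·.2 ∈ G)) ≤ #((A \ B).filter (·.2 ∈ G))) :
    #(((B \ A).filter X).filter (I.lec ·.2 = l)) ≤ #(((A \ B).filter Y).filter (I.lec ·.2 = l)) :=
  calc #(((B \ A).filter X).filter (I.lec ·.2 = l))
      ≤ #((B \ A).filter (·.2 ∈ G)) := by
        refine card_le_card fun e he => ?_
        obtain ⟨he, hl⟩ := mem_filter.mp he
        exact mem_filter.mpr ⟨(mem_filter.mp he).1, hXG e he hl⟩
    _ ≤ #((A \ B).filter (·.2 ∈ G)) := hcard
    _ ≤ #(((A \ B).filter Y).filter (I.lec ·.2 = l)) := by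
        refine card_le_card fun d hd => ?_
        obtain ⟨hd, hGd⟩ := mem_filter.mp hd
        exact mem_filter.mpr ⟨mem_filter.mpr ⟨hd, (hG _ hGd).2 d hd rfl⟩, (hG _ hGd).1⟩

theorem card_filter_le_of_lecDominated (hA : I.IsMatching A) (hB : I.IsMatching B)
    (hββ' : ∀ k s t, β k t s → β' k s t → False)
    (hY : ∀ d ∈ A \ B, ¬Y d → I.Dominated B β' d.1 d.2) {e₀ : S × P} (he₀ : e₀ ∈ B \ A)
    (hdom₀ : I.LecDominated A β e₀.1 e₀.2) :
    #((B \ A).filter (·.2 ∈ univ.filter fun q =>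
        I.lec q = I.lec e₀.2 ∧ ∀ d ∈ A \ B, d.2 = q → Y d)) ≤
      #((A \ B).filter (·.2 ∈ univ.filter fun q =>
        I.lec q = I.lec e₀.2 ∧ ∀ d ∈ A \ B, d.2 = q → Y d)) := by
  set G := univ.filter fun q => I.lec q = I.lec e₀.2 ∧ ∀ d ∈ A \ B, d.2 = q → Y d
  set H := univ.filter fun q => I.lec q = I.lec e₀.2 ∧ ¬∀ d ∈ A \ B, d.2 = q → Y d
  -- A project of this lecturer with a bad edge of `A \ B` is full in `B`: otherwise that edge
  -- is lecturer-dominated in `B`, which clashes with `e₀` being lecturer-dominated in `A`.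
  have hbad : ∀ q ∈ H, #(A.filter (·.2 = q)) ≤ #(B.filter (·.2 = q)) := by
    intro q hq
    obtain ⟨hq, hqY⟩ := (mem_filter.mp hq).2
    push Not at hqY
    obtain ⟨d, hd, rfl, hnY⟩ := hqY
    rcases hY d hd hnY with hproj | hlecd
    · rw [← card_projAsg, ← card_projAsg, hproj.1]
      exact hA.card_projAsg_le
    · exact (hββ' _ _ _ (hdom₀.rel (mem_sdiff.mp hd).1 hq)
        (hq ▸ hlecd.rel (mem_sdiff.mp he₀).1 hq.symm)).elim
  have hl : #((B \ A).filter (I.lec ·.2 = I.lec e₀.2)) ≤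
      #((A \ B).filter (I.lec ·.2 = I.lec e₀.2)) := by
    refine card_filter_sdiff_le_of_card_filter_le ?_
    rw [← hA.card_lecAsg, hdom₀.1, ← hB.card_lecAsg]
    exact hB.card_lecAsg_le
  have hH : #((A \ B).filter (·.2 ∈ H)) ≤ #((B \ A).filter (·.2 ∈ H)) :=
    card_filter_le_card_filter_of_card_fiber_le Prod.snd (· ∈ H)
      fun q hq => card_filter_sdiff_le_of_card_filter_le (hbad q hq)
  have hsplit : ∀ u : Finset (S × P), #(u.filter (I.lec ·.2 = I.lec e₀.2)) =
      #(u.filter (·.2 ∈ G)) + #(u.filter (·.2 ∈ H)) := by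
    intro u
    rw [← card_filter_add_card_filter_not (s := u.filter _)
      (fun x => ∀ d ∈ A \ B, d.2 = x.2 → Y d), filter_filter, filter_filter]
    congr 1 <;> congr 1 <;> exact filter_congr fun x _ => by simp [G, H]
  have := hsplit (B \ A)
  have := hsplit (A \ B)
  omega

theorem card_filter_lec_le_of_dominated (hA : I.IsMatching A) (hB : I.IsMatching B)
    (hββ' : ∀ k s t, β k t s → β' k s t → False)
    (hX : ∀ e ∈ B \ A, X e → I.Dominated A β e.1 e.2)
    (hY : ∀ d ∈ A \ B, ¬Y d → I.Dominated B β' d.1 d.2) (l : L) :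
    #(((B \ A).filter X).filter (I.lec ·.2 = l)) ≤ #(((A \ B).filter Y).filter (I.lec ·.2 = l)) := by
  have hgood : ∀ e ∈ (B \ A).filter X, ∀ d ∈ A \ B, d.2 = e.2 → Y d :=
    fun e he => forall_of_dominated hββ' hX hY he
  by_cases hlec : ∃ e ∈ (B \ A).filter X, I.lec e.2 = l ∧ I.LecDominated A β e.1 e.2
  · obtain ⟨e₀, he₀, rfl, hdom₀⟩ := hlec
    refine card_filter_lec_le_of_projects _ (fun q hq => (mem_filter.mp hq).2)
      (fun e he hl => mem_filter.mpr ⟨mem_univ _, hl, hgood e he⟩) ?_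
    exact card_filter_le_of_lecDominated hA hB hββ' hY (mem_filter.mp he₀).1 hdom₀
  · push Not at hlec
    set G := univ.filter fun q => I.lec q = l ∧ #(projAsg A q) = I.c q ∧
      ∀ d ∈ A \ B, d.2 = q → Y d
    have hfull : ∀ q ∈ G, #(B.filter (·.2 = q)) ≤ #(A.filter (·.2 = q)) := by
      intro q hq
      rw [← card_projAsg, ← card_projAsg, (mem_filter.mp hq).2.2.1]
      exact hB.card_projAsg_le
    refine card_filter_lec_le_of_projects G
      (fun q hq => ⟨(mem_filter.mp hq).2.1, (mem_filter.mp hq).2.2.2⟩) (fun e he hl => ?_)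
      (card_filter_le_card_filter_of_card_fiber_le Prod.snd (· ∈ G)
        fun q hq => card_filter_sdiff_le_of_card_filter_le (hfull q hq))
    obtain ⟨he', hXe⟩ := mem_filter.mp he
    exact mem_filter.mpr ⟨mem_univ _, hl,
      ((hX e he' hXe).resolve_right (hlec e he hl)).1, hgood e he⟩

theorem card_filter_sdiff_le_of_dominated (hA : I.IsMatching A) (hB : I.IsMatching B)
    (hββ' : ∀ k s t, β k t s → β' k s t → False)
    (hX : ∀ e ∈ B \ A, X e → I.Dominated A β e.1 e.2)
    (hY : ∀ d ∈ A \ B, ¬Y d → I.Dominated B β' d.1 d.2) :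
    #((B \ A).filter X) ≤ #((A \ B).filter Y) :=
  card_le_card_of_card_fiber_le (fun x => I.lec x.2)
    (card_filter_lec_le_of_dominated hA hB hββ' hX hY)

theorem false_of_dominated_of_unmatched (hA : I.IsMatching A) (hB : I.IsMatching B)
    (hββ' : ∀ k s t, β k t s → β' k s t → False)
    (hX : ∀ e ∈ B \ A, X e → I.Dominated A β e.1 e.2)
    (hY : ∀ d ∈ A \ B, ¬Y d → I.Dominated B β' d.1 d.2)
    (hYX : ∀ d ∈ A \ B, Y d → ∃ e ∈ B \ A, X e ∧ e.1 = d.1)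
    {s : S} {p : P} (hsp : (s, p) ∈ B) (hXsp : X (s, p)) (hun : ∀ q, (s, q) ∉ A) : False := by
  set E := (B \ A).filter X
  set F := (A \ B).filter Y
  have hs : s ∈ E.image Prod.fst :=
    mem_image.mpr ⟨(s, p), mem_filter.mpr ⟨mem_sdiff.mpr ⟨hsp, hun p⟩, hXsp⟩, rfl⟩
  have hFE : F.image Prod.fst ⊆ (E.image Prod.fst).erase s := by
    intro t ht
    obtain ⟨d, hd, rfl⟩ := mem_image.mp ht
    obtain ⟨hd, hYd⟩ := mem_filter.mp hd
    obtain ⟨e, he, hXe, hed⟩ := hYX d hd hYd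
    refine mem_erase.mpr ⟨fun h => hun d.2 ?_, mem_image.mpr ⟨e, mem_filter.mpr ⟨he, hXe⟩, hed⟩⟩
    exact h ▸ (mem_sdiff.mp hd).1
  have hF : #(F.image Prod.fst) = #F :=
    card_image_of_injOn (hA.injOn_fst.mono (coe_subset.mpr
      ((filter_subset _ _).trans sdiff_subset)))
  have hEF : #E ≤ #F := card_filter_sdiff_le_of_dominated hA hB hββ' hX hY
  have := card_le_card hFE
  rw [card_erase_of_mem hs] at this
  have := card_image_le (s := E) (f := Prod.fst)
  have := card_pos.mpr ⟨s, hs⟩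
  omega

end Exchange

theorem SuperStable.exists_mem_of_mem_weaklyStable {M M' : Finset (S × P)}
    (hM : I.SuperStable M) (hM' : I.WeaklyStable M') {s : S} {p : P} (hsp : (s, p) ∈ M') :
    ∃ q, (s, q) ∈ M := by
  by_contra! hun
  refine false_of_dominated_of_unmatched hM.1 hM'.1 (fun _ _ _ h h' => h.2 h')
    (X := fun e => ∀ q, (e.1, q) ∈ M → ¬I.sStrict e.1 q e.2)
    (Y := fun d => ∃ w, (d.1, w) ∈ M' ∧ ¬I.sStrict d.1 d.2 w)
    (fun e he hXe => hM.dominated (hM'.1.1 e (mem_sdiff.mp he).1) (mem_sdiff.mp he).2 hXe)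
    (fun d hd hnY => hM'.dominated (hM.1.1 d (mem_sdiff.mp hd).1) (mem_sdiff.mp hd).2
      fun w hw => not_not.mp fun h => hnY ⟨w, hw, h⟩)
    ?_ hsp (fun q hq => (hun q hq).elim) hun
  rintro d hd ⟨w, hw, hdw⟩
  obtain ⟨hdM, hdM'⟩ := mem_sdiff.mp hd
  refine ⟨(d.1, w), mem_sdiff.mpr ⟨hw, fun h => hdM' ?_⟩, fun q hq => ?_, rfl⟩
  · rwa [hM.1.2.1 _ _ _ h hdM] at hw
  · exact hM.1.2.1 _ _ _ hdM hq ▸ hdw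

theorem WeaklyStable.exists_mem_of_mem_superStable {M M' : Finset (S × P)}
    (hM' : I.WeaklyStable M') (hM : I.SuperStable M) {s : S} {q : P} (hsq : (s, q) ∈ M) :
    ∃ p, (s, p) ∈ M' := by
  by_contra! hun
  refine false_of_dominated_of_unmatched hM'.1 hM.1 (fun _ _ _ h h' => h'.2 h)
    (X := fun d => ∀ w, (d.1, w) ∈ M' → I.sStrict d.1 d.2 w)
    (Y := fun e => ∃ r, (e.1, r) ∈ M ∧ I.sStrict e.1 r e.2)
    (fun d hd hXd => hM'.dominated (hM.1.1 d (mem_sdiff.mp hd).1) (mem_sdiff.mp hd).2 hXd)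
    (fun e he hnY => hM.dominated (hM'.1.1 e (mem_sdiff.mp he).1) (mem_sdiff.mp he).2
      fun r hr h => hnY ⟨r, hr, h⟩)
    ?_ hsq (fun w hw => (hun w hw).elim) hun
  rintro e he ⟨r, hr, her⟩
  obtain ⟨heM', heM⟩ := mem_sdiff.mp he
  refine ⟨(e.1, r), mem_sdiff.mpr ⟨hr, fun h => heM ?_⟩, fun w hw => ?_, rfl⟩
  · rwa [hM'.1.2.1 _ _ _ h heM'] at hr
  · exact hM'.1.2.1 _ _ _ heM' hw ▸ her

theorem unmatched_iff_of_superStable {M M' : Finset (S × P)} (hM : I.SuperStable M)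
    (hM' : I.WeaklyStable M') (s : S) : (∀ p, (s, p) ∉ M') ↔ ∀ p, (s, p) ∉ M := by
  constructor
  · intro hun q hq
    obtain ⟨p, hp⟩ := hM'.exists_mem_of_mem_superStable hM hq
    exact hun p hp
  · intro hun p hp
    obtain ⟨q, hq⟩ := hM.exists_mem_of_mem_weaklyStable hM' hp
    exact hun q hq

end SPAST

open SPAST in
theorem weakly_stable_same_unmatched_of_super_stable_exists {S P L : Type} [Fintype S] [Fintype P] [Fintype L]
    [DecidableEq S] [DecidableEq P] [DecidableEq L]
    (I : SPAST S P L) (hss : ∃ M : Finset (S × P), SuperStable I M)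
    (M1 M2 : Finset (S × P)) (h1 : WeaklyStable I M1) (h2 : WeaklyStable I M2) :
    ∀ s : S, (∀ p : P, (s, p) ∉ M1) ↔ (∀ p : P, (s, p) ∉ M2) := by
  obtain ⟨M, hM⟩ := hss
  intro s
  exact (unmatched_iff_of_superStable hM h1 s).trans (unmatched_iff_of_superStable hM h2 s).symm
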